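/- arXiv:1607.07644 — 6 statements merged into one kernel-verified Lean document; each statement's English description precedes it below -/
import Mathlib

section
/- With the automaton B of the paper (states Q± = {a,b,a⁻¹,b⁻¹}, transitions and outputs as specified), for every i ∈ ℕ, every word w ∈ X*₍ᵢ₎, and every ξ ∈ Q±*, the word D_{i,w}(ξ) is freely irreducible if and only if ξ is freely irreducible, where a word q₁…q_n ∈ Q±* is freely irreducible if no two-letter subword q_j q_{j+1} lies in {aa⁻¹, a⁻¹a, bb⁻¹, b⁻¹b}. -/
/-- The four states `a, b, a⁻¹, b⁻¹` of the automaton `B`. -/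
inductive Qpm
  | a | b | ai | bi
  deriving DecidableEq

open Qpm

/-- The `r`-cycle `σ = (1,2,…,r)` on `{1,…,r}`. -/
def csigma (r x : ℕ) : ℕ := if x = r then 1 else x + 1

/-- The inverse of the `r`-cycle `σ`. -/
def csigmaInv (r x : ℕ) : ℕ := if x = 1 then r else x - 1

/-- The transposition `τ = (1,2)`. -/
def ctau (x : ℕ) : ℕ := if x = 1 then 2 else if x = 2 then 1 else x

/-- The transition function of the automaton `B`: states are fixed on letters
other than 1,2; on letter 1 it swaps `a ↔ b`; on letter 2 it swaps `a⁻¹ ↔ b⁻¹`. -/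
def phiB (x : ℕ) (q : Qpm) : Qpm :=
  if x = 1 then
    (match q with
     | a => b
     | b => a
     | q => q)
  else if x = 2 then
    (match q with
     | ai => bi
     | bi => ai
     | q => q)
  else q

/-- The output function of `B`: `σᵢ` at `a`, `σᵢ⁻¹` at `a⁻¹`, `τ` at `b, b⁻¹`. -/
def psiB (ri : ℕ) (q : Qpm) (x : ℕ) : ℕ :=
  match q with
  | a => csigma ri x
  | ai => csigmaInv ri x
  | _ => ctau x

/-- The dual mapping `D_{i,x}` of the automaton `B` (over `Xᵢ = {1,…,rᵢ}`). -/
def dualB (r : ℕ → ℕ) (i : ℕ) : ℕ → List Qpm → List Qpm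
  | _, [] => []
  | x, q :: qs => phiB x q :: dualB r i (psiB (r i) q x) qs

/-- `D_{i,w}`, the composition of dual mappings of `B` along the word `w`. -/
def dualWB (r : ℕ → ℕ) : ℕ → List ℕ → List Qpm → List Qpm
  | _, [], ξ => ξ
  | i, x :: xs, ξ => dualWB r (i + 1) xs (dualB r i x ξ)

/-- The formal inverse of a state. -/
def qinv : Qpm → Qpm
  | a => ai
  | ai => a
  | b => bi
  | bi => b

/-- The swap `a ↔ b`, `a⁻¹ ↔ b⁻¹` (the tilde operation). -/
def til : Qpm → Qpm
  | a => b
  | b => a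
  | ai => bi
  | bi => ai

/-- The pattern symbol of a state: `true` stands for `*`, `false` for `*⁻¹`. -/
def patt : Qpm → Bool
  | a => true
  | b => true
  | _ => false

/-- A word over `Q±` is freely irreducible if no two consecutive letters are
mutually inverse. -/
def FreelyIrred (ξ : List Qpm) : Prop := List.Chain' (fun p q => q ≠ qinv p) ξ

/-- A word over the changing alphabet `Xᵢ = {1,…,rᵢ}`, starting at index `i`. -/
def ValidB (r : ℕ → ℕ) : ℕ → List ℕ → Prop
  | _, [] => True
  | i, x :: xs => x ∈ Set.Icc 1 (r i) ∧ ValidB r (i + 1) xs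

/-!
The dual map `D_{i,x}` rewrites a word letter by letter, so it suffices to see that it creates and
destroys no cancellation `q q⁻¹`: if the state `q` reads `x` and hands `y = ψᵢ(q, x)` on to its
successor `p`, then `φᵢ(y, p) = φᵢ(x, q)⁻¹` holds exactly when `p = q⁻¹`. This is a finite check
on the four states and the letters `1, 2` where `φᵢ` acts; the alphabet size enters only through
`σᵢ(1) ≠ 1`, that is `rᵢ ≠ 1`.
-/

lemma phiB_psiB_eq_qinv_phiB_iff {ri : ℕ} (hri : ri ≠ 1) (q p : Qpm) (x : ℕ) :
    phiB (psiB ri q x) p = qinv (phiB x q) ↔ p = qinv q := by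
  cases q <;> cases p <;> simp only [phiB, psiB, csigma, csigmaInv, ctau, qinv] <;>
    split_ifs <;> simp_all

lemma freelyIrred_cons_cons {q p : Qpm} {ξ : List Qpm} :
    FreelyIrred (q :: p :: ξ) ↔ p ≠ qinv q ∧ FreelyIrred (p :: ξ) :=
  List.isChain_cons_cons

lemma freelyIrred_dualB_iff {r : ℕ → ℕ} {i : ℕ} (hri : r i ≠ 1) (x : ℕ) (ξ : List Qpm) :
    FreelyIrred (dualB r i x ξ) ↔ FreelyIrred ξ := by
  induction ξ generalizing x with
  | nil => rfl
  | cons q ξ ih =>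
    cases ξ with
    | nil => exact iff_of_true (List.isChain_singleton _) (List.isChain_singleton _)
    | cons p ξ =>
      simp only [dualB] at ih ⊢
      rw [freelyIrred_cons_cons, freelyIrred_cons_cons, ne_eq, ne_eq,
        phiB_psiB_eq_qinv_phiB_iff hri, ih]

lemma freelyIrred_dualWB_iff {r : ℕ → ℕ} (hr : ∀ i, r i ≠ 1) (i : ℕ) (w : List ℕ)
    (ξ : List Qpm) : FreelyIrred (dualWB r i w ξ) ↔ FreelyIrred ξ := by
  induction w generalizing i ξ with
  | nil => rfl
  | cons x w ih => rw [dualWB, ih, freelyIrred_dualB_iff (hr i)]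

theorem dualWB_freelyIrred_iff_general
    (r : ℕ → ℕ) (hge : ∀ i, 2 ≤ r i) :
    ∀ (i : ℕ) (w : List ℕ), ValidB r i w → ∀ ξ : List Qpm,
      (FreelyIrred (dualWB r i w ξ) ↔ FreelyIrred ξ) :=
  fun i w _ ξ => freelyIrred_dualWB_iff (fun j => by have := hge j; omega) i w ξ

/-- for every `i`, every word `w ∈ X*₍ᵢ₎` and every `ξ ∈ Q±*`,
the word `D_{i,w}(ξ)` is freely irreducible iff `ξ` is freely irreducible. -/
theorem dualWB_freelyIrred_iff
    (r : ℕ → ℕ) (hmono : Monotone r) (hge : ∀ i, 2 ≤ r i)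
    (hunb : ∀ N, ∃ i, N < r i) :
    ∀ (i : ℕ) (w : List ℕ), ValidB r i w → ∀ ξ : List Qpm,
      (FreelyIrred (dualWB r i w ξ) ↔ FreelyIrred ξ) :=
  dualWB_freelyIrred_iff_general r hge
end

section
/- Every nonempty pattern V over {*, *⁻¹} has a unique decomposition V = V_I V_II such that (i) if V_I is nonempty then the last letter of V_I equals the first letter of V_II, and (ii) V_II equals (* *⁻¹)^l *^r or (*⁻¹ *)^l *⁻ʳ for some l ≥ 0 and r ∈ {0,1} with (l, r) ≠ (0, 0). -/
/-!
Writing `*` as `true` and `*⁻¹` as `false`, the admissible words `V_II` are exactly the nonempty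
words with no two equal adjacent letters, and condition (i) says that such a suffix cannot be
extended by one more letter to the left. So `V_II` must be the longest suffix of `V` without two
equal adjacent letters; this makes sense over any alphabet.
-/

namespace PatternDecomp

variable {α : Type*}

def IsAlternatingTailSplit (V : List α) (p : List α × List α) : Prop :=
  V = p.1 ++ p.2 ∧ (p.1 ≠ [] → p.1.getLast? = p.2.head?) ∧ p.2 ≠ [] ∧ p.2.IsChain (· ≠ ·)

lemma eq_nil_of_isChain_append {A C B : List α} (hB : B ≠ [])
    (hlast : A ++ C ≠ [] → (A ++ C).getLast? = B.head?) (hCB : (C ++ B).IsChain (· ≠ ·)) :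
    C = [] := by
  by_contra hC
  obtain ⟨b, hb⟩ := Option.ne_none_iff_exists'.mp (List.head?_eq_none_iff.not.mpr hB)
  have hCb : C.getLast? = some b := by
    rw [← List.getLast?_append_of_ne_nil A hC, hlast (List.append_ne_nil_of_right_ne_nil A hC), hb]
  exact (List.isChain_append.mp hCB).2.2 b hCb b hb rfl

lemma IsAlternatingTailSplit.unique {V : List α} {p q : List α × List α}
    (hp : IsAlternatingTailSplit V p) (hq : IsAlternatingTailSplit V q) : p = q := by
  obtain ⟨hVp, hlp, hp₂, hcp⟩ := hp
  obtain ⟨hVq, hlq, hq₂, hcq⟩ := hq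
  rcases List.append_eq_append_iff.mp (hVp.symm.trans hVq) with ⟨C, hq₁, hp₂C⟩ | ⟨C, hp₁, hq₂C⟩
  · obtain rfl : C = [] := eq_nil_of_isChain_append hq₂ (hq₁ ▸ hlq) (hp₂C ▸ hcp)
    simp_all [Prod.ext_iff]
  · obtain rfl : C = [] := eq_nil_of_isChain_append hp₂ (hp₁ ▸ hlp) (hq₂C ▸ hcq)
    simp_all [Prod.ext_iff]

lemma exists_isAlternatingTailSplit {V : List α} (hV : V ≠ []) :
    ∃ p, IsAlternatingTailSplit V p := by
  induction V using List.reverseRecOn with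
  | nil => exact absurd rfl hV
  | append_singleton V a ih =>
    rcases eq_or_ne V [] with rfl | hV'
    · exact ⟨([], [a]), by simp [IsAlternatingTailSplit]⟩
    obtain ⟨⟨A, B⟩, rfl, hlast, hB, hchain⟩ := ih hV'
    by_cases hBa : (B ++ [a]).IsChain (· ≠ ·)
    · refine ⟨(A, B ++ [a]), by simp, ?_, by simp, hBa⟩
      rw [List.head?_append_of_ne_nil B hB]
      exact hlast
    · -- `B` ends in `a`, so the new tail is `[a]`
      refine ⟨(A ++ B, [a]), by simp, fun _ => ?_, by simp, List.isChain_singleton a⟩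
      simp only [List.isChain_append, hchain, List.isChain_singleton, true_and] at hBa
      simpa [List.getLast?_append_of_ne_nil A hB] using hBa

theorem existsUnique_isAlternatingTailSplit {V : List α} (hV : V ≠ []) :
    ∃! p, IsAlternatingTailSplit V p :=
  let ⟨p, hp⟩ := exists_isAlternatingTailSplit hV
  ⟨p, hp, fun _ hq => hq.unique hp⟩

def altWord : Bool → ℕ → List Bool
  | _, 0 => []
  | s, n + 1 => s :: altWord (!s) n

lemma isChain_altWord (s : Bool) (n : ℕ) : (altWord s n).IsChain (· ≠ ·) := by
  induction n generalizing s with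
  | zero => exact List.isChain_nil
  | succ n ih =>
    refine (ih !s).cons fun y hy => ?_
    cases n <;> simp_all [altWord]

lemma flatten_replicate_append_replicate_eq_altWord (s : Bool) (l : ℕ) {r : ℕ} (hr : r ≤ 1) :
    (List.replicate l [s, !s]).flatten ++ List.replicate r s = altWord s (2 * l + r) := by
  induction l with
  | zero => interval_cases r <;> rfl
  | succ l ih =>
    rw [show 2 * (l + 1) + r = 2 * l + r + 1 + 1 by ring]
    simp [List.replicate_succ, altWord, ih]

lemma eq_altWord_of_isChain {a : Bool} {t : List Bool} (h : (a :: t).IsChain (· ≠ ·)) :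
    a :: t = altWord a (t.length + 1) := by
  induction t generalizing a with
  | nil => rfl
  | cons b t ih =>
    obtain ⟨hab, h⟩ := List.isChain_cons_cons.mp h
    obtain rfl : b = !a := by cases a <;> cases b <;> simp_all
    rw [List.length_cons, altWord, ← ih h]

lemma exists_flatten_replicate_iff (B : List Bool) :
    (∃ (s : Bool) (l r : ℕ), r ≤ 1 ∧ (l, r) ≠ (0, 0) ∧
      B = (List.replicate l [s, !s]).flatten ++ List.replicate r s) ↔
    B ≠ [] ∧ B.IsChain (· ≠ ·) := by
  constructor
  · rintro ⟨s, l, r, hr, hlr, rfl⟩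
    rw [flatten_replicate_append_replicate_eq_altWord s l hr]
    refine ⟨?_, isChain_altWord s _⟩
    obtain ⟨n, hn⟩ : ∃ n, 2 * l + r = n + 1 := Nat.exists_eq_add_one.mpr (by grind)
    simp [hn, altWord]
  · rintro ⟨hB, hchain⟩
    obtain ⟨a, t, rfl⟩ := List.exists_cons_of_ne_nil hB
    refine ⟨a, (t.length + 1) / 2, (t.length + 1) % 2, by omega, by grind, ?_⟩
    rw [flatten_replicate_append_replicate_eq_altWord a _ (by omega), Nat.div_add_mod]
    exact eq_altWord_of_isChain hchain

end PatternDecomp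

open PatternDecomp in
/-- every nonempty pattern `V` (a word over the two symbols
`*` = `true` and `*⁻¹` = `false`) has a unique decomposition `V = V_I V_II`
such that (i) if `V_I` is nonempty then its last letter equals the first
letter of `V_II`, and (ii) `V_II` has the form `(s s̄)^l s^r` for some symbol
`s`, `l ≥ 0` and `r ∈ {0,1}` with `(l,r) ≠ (0,0)`. -/
theorem pattern_unique_decomposition :
    ∀ V : List Bool, V ≠ [] →
      ∃! p : List Bool × List Bool,
        V = p.1 ++ p.2 ∧
        (p.1 ≠ [] → p.1.getLast? = p.2.head?) ∧
        ∃ (s : Bool) (l rr : ℕ), rr ≤ 1 ∧ (l, rr) ≠ (0, 0) ∧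
          p.2 = (List.replicate l [s, !s]).flatten ++ List.replicate rr s := by
  intro V hV
  simpa only [IsAlternatingTailSplit, exists_flatten_replicate_iff, and_assoc] using
    existsUnique_isAlternatingTailSplit hV
end

section
/- Let ξ ∈ Q±* be freely irreducible with decomposition ξ = ξ_I ξ_II into first and second parts (induced by the decomposition of its pattern). Then for the automaton B of the paper, for any i ∈ ℕ and w ∈ X*₍ᵢ₎, either D_{i,w}(ξ) = D_{i,w}(ξ_I) ξ_II or D_{i,w}(ξ) = D_{i,w}(ξ_I) ξ̃_II, where ξ̃ denotes the word obtained from ξ by swapping a↔b and a⁻¹↔b⁻¹. -/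
open Qpm

/-! On a word whose pattern alternates between `*` and `*⁻¹`, the dual mapping of `B` either
swaps every letter or fixes every letter: `B` leaves a state `q` only on the letter
`trigger q`, and its output letter is the trigger of the next state exactly when its input
letter was the trigger of the current one. By the cocycle identity, `D_{i,x}(ξ_I ξ_II)` is
therefore `D_{i,x}(ξ_I)` followed by `ξ_II` or `ξ̃_II`; since `ξ̃_II` alternates as well and
`~` is an involution, this form survives the iteration along `w`. -/

lemma til_til (q : Qpm) : til (til q) = q := by cases q <;> rfl

lemma patt_til (q : Qpm) : patt (til q) = patt q := by cases q <;> rfl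

lemma map_til_map_til (ξ : List Qpm) : (ξ.map til).map til = ξ := by
  simp [Function.comp_def, til_til]

def trigger (q : Qpm) : ℕ := if patt q then 1 else 2

lemma phiB_eq_ite (x : ℕ) (q : Qpm) : phiB x q = if x = trigger q then til q else q := by
  cases q <;> simp only [phiB, trigger, patt, til] <;> split_ifs <;> first | rfl | omega

lemma psiB_eq_trigger_iff {ri : ℕ} (hri : ri ≠ 1) {p q : Qpm} (hpq : patt q = !patt p)
    (x : ℕ) : psiB ri p x = trigger q ↔ x = trigger p := by
  revert hpq
  cases p <;> cases q <;> simp [psiB, trigger, patt, csigma, csigmaInv, ctau] <;> split_ifs <;> omega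

def Alternating (ξ : List Qpm) : Prop := ξ.IsChain fun p q => patt q = !patt p

lemma Alternating.map_til {ξ : List Qpm} (h : Alternating ξ) : Alternating (ξ.map til) := by
  simpa only [Alternating, List.isChain_map, patt_til] using h

lemma isChain_not_flatten_replicate_append (s : Bool) (l : ℕ) {n : ℕ} (hn : n ≤ 1) :
    ((List.replicate l [s, !s]).flatten ++ List.replicate n s).IsChain fun s t => t = !s := by
  induction l with
  | zero => interval_cases n <;> simp
  | succ l ih =>
    rw [List.replicate_succ, List.flatten_cons, List.append_assoc]
    cases l <;> interval_cases n <;> simp_all [List.replicate_succ, List.isChain_cons_cons]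

lemma alternating_of_map_patt_eq {ξ : List Qpm} {s : Bool} {l n : ℕ} (hn : n ≤ 1)
    (h : ξ.map patt = (List.replicate l [s, !s]).flatten ++ List.replicate n s) :
    Alternating ξ := by
  have := isChain_not_flatten_replicate_append s l hn
  rwa [← h, List.isChain_map] at this

/-- The action `A_{i,ξ}(x)` of the state word `ξ` of `B` on the input letter `x`. -/
def actB (ri : ℕ) (ξ : List Qpm) (x : ℕ) : ℕ := ξ.foldl (fun y q => psiB ri q y) x

lemma dualB_append (r : ℕ → ℕ) (i x : ℕ) (ξ η : List Qpm) :
    dualB r i x (ξ ++ η) = dualB r i x ξ ++ dualB r i (actB (r i) ξ x) η := by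
  induction ξ generalizing x with
  | nil => rfl
  | cons q ξ ih => simp [dualB, actB, ih]

section
variable {r : ℕ → ℕ} {i : ℕ}

lemma dualB_cons_of_alternating (hri : r i ≠ 1) {q : Qpm} {ξ : List Qpm}
    (h : Alternating (q :: ξ)) (x : ℕ) :
    dualB r i x (q :: ξ) = if x = trigger q then (q :: ξ).map til else q :: ξ := by
  induction ξ generalizing q x with
  | nil => simp only [dualB, phiB_eq_ite]; split_ifs <;> rfl
  | cons q' ξ ih =>
    obtain ⟨hqq', h'⟩ := List.isChain_cons_cons.mp h
    rw [dualB, ih h']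
    simp only [psiB_eq_trigger_iff hri hqq', phiB_eq_ite]
    split_ifs <;> rfl

lemma dualB_of_alternating (hri : r i ≠ 1) {ξ : List Qpm} (h : Alternating ξ) (x : ℕ) :
    dualB r i x ξ = ξ ∨ dualB r i x ξ = ξ.map til := by
  cases ξ with
  | nil => exact Or.inl rfl
  | cons q ξ => rw [dualB_cons_of_alternating hri h]; split_ifs <;> simp

end

lemma dualWB_append_of_alternating {r : ℕ → ℕ} (hr : ∀ j, r j ≠ 1) (w : List ℕ) (i : ℕ)
    (ξI : List Qpm) {ξII : List Qpm} (h : Alternating ξII) :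
    dualWB r i w (ξI ++ ξII) = dualWB r i w ξI ++ ξII ∨
      dualWB r i w (ξI ++ ξII) = dualWB r i w ξI ++ ξII.map til := by
  induction w generalizing i ξI ξII with
  | nil => exact Or.inl rfl
  | cons x w ih =>
    simp only [dualWB, dualB_append]
    rcases dualB_of_alternating (hr i) h (actB (r i) ξI x) with h' | h' <;> rw [h']
    · exact ih (i + 1) _ h
    · rcases ih (i + 1) _ h.map_til with h'' | h''
      · exact Or.inr h''
      · rw [h'', map_til_map_til]
        exact Or.inl rfl

theorem dualWB_on_decomposition_general
    (r : ℕ → ℕ) (hge : ∀ i, 2 ≤ r i)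
    (ξI ξII : List Qpm)
    (hform : ∃ (s : Bool) (l rr : ℕ), rr ≤ 1 ∧ (l, rr) ≠ (0, 0) ∧
      ξII.map patt = (List.replicate l [s, !s]).flatten ++ List.replicate rr s) :
    ∀ (i : ℕ) (w : List ℕ), ValidB r i w →
      dualWB r i w (ξI ++ ξII) = dualWB r i w ξI ++ ξII ∨
      dualWB r i w (ξI ++ ξII) = dualWB r i w ξI ++ ξII.map til := by
  obtain ⟨s, l, rr, hrr, -, hpatt⟩ := hform
  intro i w _
  exact dualWB_append_of_alternating (fun j => (Nat.one_lt_two.trans_le (hge j)).ne') w i ξI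
    (alternating_of_map_patt_eq hrr hpatt)

/-- if `ξ = ξ_I ξ_II` is freely irreducible (with `ξ_I, ξ_II`
the first and second parts, induced by the pattern decomposition), then
`D_{i,w}(ξ) = D_{i,w}(ξ_I) ξ_II` or `D_{i,w}(ξ) = D_{i,w}(ξ_I) ξ̃_II`. -/
theorem dualWB_on_decomposition
    (r : ℕ → ℕ) (hmono : Monotone r) (hge : ∀ i, 2 ≤ r i)
    (hunb : ∀ N, ∃ i, N < r i)
    (ξI ξII : List Qpm) (hirr : FreelyIrred (ξI ++ ξII))
    (hlast : ξI ≠ [] → (ξI.map patt).getLast? = (ξII.map patt).head?)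
    (hform : ∃ (s : Bool) (l rr : ℕ), rr ≤ 1 ∧ (l, rr) ≠ (0, 0) ∧
      ξII.map patt = (List.replicate l [s, !s]).flatten ++ List.replicate rr s) :
    ∀ (i : ℕ) (w : List ℕ), ValidB r i w →
      dualWB r i w (ξI ++ ξII) = dualWB r i w ξI ++ ξII ∨
      dualWB r i w (ξI ++ ξII) = dualWB r i w ξI ++ ξII.map til :=
  dualWB_on_decomposition_general r hge ξI ξII hform
end

section
/- The automaton B of the paper is stabilized: for every n ∈ ℕ, letting λ_n be the least index with r_{λ_n} > 2n, one has for all i, i' ≥ λ_n that the families of dual mappings {D_{i,x} : x ∈ Xᵢ} and {D_{i',y} : y ∈ X_{i'}} are n-equivalent, i.e., for each x ∈ Xᵢ there exists y ∈ X_{i'} with D_{i,x}(ξ) = D_{i',y}(ξ) for all ξ ∈ Q±ⁿ, and vice versa. -/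
open Qpm

/-- Invariant relating starting letters `x` (modulus `r`) and `y` (modulus `r'`)
guaranteeing equal dual action on words of length `m`. -/
def RelB (r r' m x y : ℕ) : Prop :=
  (x = y ∧ 1 ≤ x ∧ x + m ≤ r + 1 ∧ x + m ≤ r' + 1) ∨
  (r - x = r' - y ∧ x ≤ r ∧ y ≤ r' ∧ m + 2 ≤ x ∧ m + 2 ≤ y) ∨
  (m + 2 ≤ x ∧ x + m ≤ r + 1 ∧ m + 2 ≤ y ∧ y + m ≤ r' + 1)

lemma phiB_of_RelB {r r' m x y : ℕ} (h : RelB r r' (m + 1) x y) (q : Qpm) :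
    phiB x q = phiB y q := by
  rcases h with ⟨rfl, -⟩ | ⟨-, -, -, hx, hy⟩ | ⟨hx, -, hy, -⟩
  · rfl
  · have hx1 : x ≠ 1 := by omega
    have hx2 : x ≠ 2 := by omega
    have hy1 : y ≠ 1 := by omega
    have hy2 : y ≠ 2 := by omega
    simp [phiB, hx1, hx2, hy1, hy2]
  · have hx1 : x ≠ 1 := by omega
    have hx2 : x ≠ 2 := by omega
    have hy1 : y ≠ 1 := by omega
    have hy2 : y ≠ 2 := by omega
    simp [phiB, hx1, hx2, hy1, hy2]

set_option maxHeartbeats 1000000 in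
lemma RelB.step {r r' m x y : ℕ} (h : RelB r r' (m + 1) x y) (hm : 1 ≤ m)
    (hr : 2 * (m + 1) < r) (hr' : 2 * (m + 1) < r') (q : Qpm) :
    RelB r r' m (psiB r q x) (psiB r' q y) := by
  cases q <;>
    simp only [RelB, psiB, csigma, csigmaInv, ctau] at h ⊢ <;>
    split_ifs <;> omega

lemma dualB_eq_of_RelB (r : ℕ → ℕ) (i i' : ℕ) :
    ∀ ξ : List Qpm, ∀ x y, RelB (r i) (r i') ξ.length x y →
      2 * ξ.length < r i → 2 * ξ.length < r i' →
      dualB r i x ξ = dualB r i' y ξ := by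
  intro ξ
  induction ξ with
  | nil => intro x y _ _ _; rfl
  | cons q qs ih =>
      intro x y h hr hr'
      simp only [List.length_cons] at h hr hr'
      show phiB x q :: dualB r i (psiB (r i) q x) qs =
           phiB y q :: dualB r i' (psiB (r i') q y) qs
      rw [phiB_of_RelB h q]
      cases qs with
      | nil => rfl
      | cons q' qs' =>
          rw [ih (psiB (r i) q x) (psiB (r i') q y)
            (h.step (by simp) hr hr' q) (by omega) (by omega)]

/-- the automaton `B` is stabilized: with `λ_n` the least index
such that `r_{λ_n} > 2n`, for all `i, i' ≥ λ_n` the families of dual mappings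
`{D_{i,x} : x ∈ Xᵢ}` and `{D_{i',y} : y ∈ X_{i'}}` are `n`-equivalent. -/
theorem automaton_B_stabilized
    (r : ℕ → ℕ) (hmono : Monotone r) (hge : ∀ i, 2 ≤ r i)
    (hunb : ∀ N, ∃ i, N < r i)
    (L : ℕ → ℕ) (hL : ∀ n, 2 * n < r (L n) ∧ ∀ j < L n, r j ≤ 2 * n) :
    ∀ n : ℕ, ∀ i, L n ≤ i → ∀ i', L n ≤ i' →
      ∀ x ∈ Set.Icc 1 (r i), ∃ y ∈ Set.Icc 1 (r i'),
        ∀ ξ : List Qpm, ξ.length = n → dualB r i x ξ = dualB r i' y ξ := by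
  intro n i hi i' hi' x hx
  obtain ⟨hLn, -⟩ := hL n
  have hri : 2 * n < r i := lt_of_lt_of_le hLn (hmono hi)
  have hri' : 2 * n < r i' := lt_of_lt_of_le hLn (hmono hi')
  simp only [Set.mem_Icc] at hx
  rcases Nat.eq_zero_or_pos n with rfl | hn
  · exact ⟨1, by simp only [Set.mem_Icc]; omega,
      fun ξ hξ => by
        rw [List.length_eq_zero_iff] at hξ; subst hξ; rfl⟩
  · -- choose y according to the position of x
    have key : ∃ y, 1 ≤ y ∧ y ≤ r i' ∧ RelB (r i) (r i') n x y := by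
      by_cases h2 : r i - x ≤ n - 1
      · refine ⟨r i' - (r i - x), by omega, by omega,
          Or.inr (Or.inl ⟨by omega, by omega, by omega, by omega, by omega⟩)⟩
      · by_cases h1 : x + n ≤ r i' + 1
        · exact ⟨x, by omega, by omega,
            Or.inl ⟨rfl, by omega, by omega, by omega⟩⟩
        · exact ⟨n + 2, by omega, by omega,
            Or.inr (Or.inr ⟨by omega, by omega, by omega, by omega⟩)⟩
    obtain ⟨y, hy1, hy2, hrel⟩ := key
    refine ⟨y, by simp only [Set.mem_Icc]; omega, fun ξ hξ => ?_⟩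
    exact dualB_eq_of_RelB r i i' ξ x y (hξ ▸ hrel) (by omega) (by omega)
end

section
/- Let ξ_II ∈ {(ab⁻¹)^l a^r, (ba⁻¹)^l b^r, (a⁻¹b)^l a⁻ʳ, (b⁻¹a)^l b⁻ʳ} with l ≥ 0, r ∈ {0,1}, (l,r) ≠ (0,0), regarded as an element of the free group F(a,b), and let ξ̃_II be obtained by swapping a↔b. Then the element ξ_II⁻¹ ξ̃_II of F(a,b) belongs to {η₁, η₁⁻¹, η₂, η₂⁻¹}, where η₁ = a^r (b⁻¹a)^{2l} b⁻ʳ and η₂ = a⁻ʳ (ba⁻¹)^{2l} b^r; in particular ξ_II⁻¹ ξ̃_II ≠ 1 in F(a,b). -/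
/-- The generator `a` of the free group `F(a,b)`. -/
def ga : FreeGroup Bool := FreeGroup.of true

/-- The generator `b` of the free group `F(a,b)`. -/
def gb : FreeGroup Bool := FreeGroup.of false

/-- The homomorphism of `F(a,b)` swapping `a ↔ b` (and hence `a⁻¹ ↔ b⁻¹`). -/
def swapHom : FreeGroup Bool →* FreeGroup Bool :=
  FreeGroup.lift (fun g => FreeGroup.of (!g))

def expA : FreeGroup Bool →* Multiplicative ℤ :=
  FreeGroup.lift (fun g => Multiplicative.ofAdd (if g then (1:ℤ) else 0))

lemma swap_ga : swapHom ga = gb := by simp [swapHom, ga, gb]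
lemma swap_gb : swapHom gb = ga := by simp [swapHom, ga, gb]
lemma expA_ga : expA ga = Multiplicative.ofAdd (1:ℤ) := by simp [expA, ga]
lemma expA_gb : expA gb = 1 := by simp [expA, gb]

lemma inv_mul_pow (x y : FreeGroup Bool) (l : ℕ) : ((x * y⁻¹) ^ l)⁻¹ = (y * x⁻¹) ^ l := by
  rw [← inv_pow, mul_inv_rev, inv_inv]

lemma inv_mul_pow' (x y : FreeGroup Bool) (l : ℕ) : ((x⁻¹ * y) ^ l)⁻¹ = (y⁻¹ * x) ^ l := by
  rw [← inv_pow, mul_inv_rev, inv_inv]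

lemma eta1_ne (l rr : ℕ) (h2 : (l, rr) ≠ (0, 0)) :
    ga ^ rr * (gb⁻¹ * ga) ^ (2 * l) * (gb ^ rr)⁻¹ ≠ 1 := by
  intro h
  have h' := congrArg (fun x => Multiplicative.toAdd (expA x)) h
  simp [expA_ga, expA_gb] at h'
  have hl : l = 0 := by omega
  have hr : rr = 0 := by omega
  exact h2 (by simp [hl, hr])

lemma eta2_ne (l rr : ℕ) (h2 : (l, rr) ≠ (0, 0)) :
    (ga ^ rr)⁻¹ * (gb * ga⁻¹) ^ (2 * l) * gb ^ rr ≠ 1 := by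
  intro h
  have h' := congrArg (fun x => Multiplicative.toAdd (expA x)) h
  simp [expA_ga, expA_gb] at h'
  have hl : l = 0 := by omega
  have hr : rr = 0 := by omega
  exact h2 (by simp [hl, hr])

lemma membership_aux
    (l rr : ℕ) (h1 : rr ≤ 1) (h2 : (l, rr) ≠ (0, 0))
    (ξ : FreeGroup Bool)
    (hξ : ξ = (ga * gb⁻¹) ^ l * ga ^ rr ∨
          ξ = (gb * ga⁻¹) ^ l * gb ^ rr ∨
          ξ = (ga⁻¹ * gb) ^ l * (ga ^ rr)⁻¹ ∨
          ξ = (gb⁻¹ * ga) ^ l * (gb ^ rr)⁻¹) :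
    (ξ⁻¹ * swapHom ξ = ga ^ rr * (gb⁻¹ * ga) ^ (2 * l) * (gb ^ rr)⁻¹ ∨
     ξ⁻¹ * swapHom ξ = (ga ^ rr * (gb⁻¹ * ga) ^ (2 * l) * (gb ^ rr)⁻¹)⁻¹ ∨
     ξ⁻¹ * swapHom ξ = (ga ^ rr)⁻¹ * (gb * ga⁻¹) ^ (2 * l) * gb ^ rr ∨
     ξ⁻¹ * swapHom ξ = ((ga ^ rr)⁻¹ * (gb * ga⁻¹) ^ (2 * l) * gb ^ rr)⁻¹) := by
  have e2 : ∀ x : FreeGroup Bool, x ^ (2 * l) = x ^ l * x ^ l := by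
    intro x; rw [two_mul, pow_add]
  rcases hξ with h | h | h | h <;> subst h <;>
    simp only [map_mul, map_pow, map_inv, swap_ga, swap_gb, mul_inv_rev, inv_mul_pow, inv_mul_pow', e2, inv_inv, inv_pow]
  · right; right; left; group
  · right; right; right; group
  · left; group
  · right; left; group

/-- for `ξ_II` one of the four reduced second-part forms,
the element `ξ_II⁻¹ ξ̃_II` of `F(a,b)` lies in `{η₁, η₁⁻¹, η₂, η₂⁻¹}` with
`η₁ = a^r (b⁻¹a)^{2l} b⁻ʳ`, `η₂ = a⁻ʳ (ba⁻¹)^{2l} b^r`; in particular it is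
not the identity. -/
theorem second_part_commutator_nontrivial
    (l rr : ℕ) (h1 : rr ≤ 1) (h2 : (l, rr) ≠ (0, 0))
    (ξ : FreeGroup Bool)
    (hξ : ξ = (ga * gb⁻¹) ^ l * ga ^ rr ∨
          ξ = (gb * ga⁻¹) ^ l * gb ^ rr ∨
          ξ = (ga⁻¹ * gb) ^ l * (ga ^ rr)⁻¹ ∨
          ξ = (gb⁻¹ * ga) ^ l * (gb ^ rr)⁻¹) :
    (ξ⁻¹ * swapHom ξ = ga ^ rr * (gb⁻¹ * ga) ^ (2 * l) * (gb ^ rr)⁻¹ ∨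
     ξ⁻¹ * swapHom ξ = (ga ^ rr * (gb⁻¹ * ga) ^ (2 * l) * (gb ^ rr)⁻¹)⁻¹ ∨
     ξ⁻¹ * swapHom ξ = (ga ^ rr)⁻¹ * (gb * ga⁻¹) ^ (2 * l) * gb ^ rr ∨
     ξ⁻¹ * swapHom ξ = ((ga ^ rr)⁻¹ * (gb * ga⁻¹) ^ (2 * l) * gb ^ rr)⁻¹) ∧
    ξ⁻¹ * swapHom ξ ≠ 1 := by
  have hm := membership_aux l rr h1 h2 ξ hξ
  refine ⟨hm, ?_⟩
  rcases hm with h | h | h | h <;> rw [h]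
  · exact eta1_ne l rr h2
  · exact inv_ne_one.mpr (eta1_ne l rr h2)
  · exact eta2_ne l rr h2
  · exact inv_ne_one.mpr (eta2_ne l rr h2)
end

section
/- Let X = {1, 2, …, r} with r > 2l + r₀ + 2, where l ≥ 0, r₀ ∈ {0,1}, (l, r₀) ≠ (0,0). Let σ be the r-cycle (1, 2, …, r) and τ the transposition (1, 2) in the symmetric group on X. Then neither of the permutations π₁ = τ^{r₀} (στ)^{2l} σ^{r₀} nor π₂ = τ^{r₀} (σ⁻¹τ)^{2l} σ^{−r₀} is the identity permutation: indeed π₁(3) = σ^{2l+r₀}(3) ≠ 3 and π₂(r) = σ^{−2l−r₀}(r) ≠ r. -/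
lemma ctau_fix {x : ℕ} (h : 3 ≤ x) : ctau x = x := by
  unfold ctau; split_ifs <;> omega

lemma ctau_iter_fix (k : ℕ) {x : ℕ} (h : 3 ≤ x) : ctau^[k] x = x := by
  induction k with
  | zero => rfl
  | succ n ih => rw [Function.iterate_succ_apply, ctau_fix h, ih]

lemma csigma_iter (r : ℕ) (k : ℕ) : ∀ x, x + k ≤ r → (csigma r)^[k] x = x + k := by
  induction k with
  | zero => intro x _; rfl
  | succ n ih =>
    intro x hx
    rw [Function.iterate_succ_apply]
    have : csigma r x = x + 1 := by unfold csigma; split_ifs <;> omega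
    rw [this, ih (x + 1) (by omega)]
    omega

lemma ctau_csigma_iter (r : ℕ) (k : ℕ) : ∀ x, 3 ≤ x → x + k ≤ r →
    (ctau ∘ csigma r)^[k] x = x + k := by
  induction k with
  | zero => intro x _ _; rfl
  | succ n ih =>
    intro x hx3 hx
    rw [Function.iterate_succ_apply]
    have h1 : csigma r x = x + 1 := by unfold csigma; split_ifs <;> omega
    have : (ctau ∘ csigma r) x = x + 1 := by
      rw [Function.comp_apply, h1]; exact ctau_fix (by omega)
    rw [this, ih (x + 1) (by omega) (by omega)]
    omega

lemma csigmaInv_iter (r : ℕ) (k : ℕ) : ∀ x, k + 2 ≤ x → (csigmaInv r)^[k] x = x - k := by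
  induction k with
  | zero => intro x _; simp
  | succ n ih =>
    intro x hx
    rw [Function.iterate_succ_apply]
    have : csigmaInv r x = x - 1 := by unfold csigmaInv; split_ifs <;> omega
    rw [this, ih (x - 1) (by omega)]
    omega

lemma ctau_csigmaInv_iter (r : ℕ) (k : ℕ) : ∀ x, k + 3 ≤ x →
    (ctau ∘ csigmaInv r)^[k] x = x - k := by
  induction k with
  | zero => intro x _; simp
  | succ n ih =>
    intro x hx
    rw [Function.iterate_succ_apply]
    have h1 : csigmaInv r x = x - 1 := by unfold csigmaInv; split_ifs <;> omega
    have : (ctau ∘ csigmaInv r) x = x - 1 := by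
      rw [Function.comp_apply, h1]; exact ctau_fix (by omega)
    rw [this, ih (x - 1) (by omega)]
    omega

/-- with `r > 2l + r₀ + 2`, neither `π₁ = τ^{r₀}(στ)^{2l}σ^{r₀}`
nor `π₂ = τ^{r₀}(σ⁻¹τ)^{2l}σ^{−r₀}` is the identity permutation of
`{1,…,r}`: indeed `π₁(3) = σ^{2l+r₀}(3) ≠ 3` and `π₂(r) = σ^{−2l−r₀}(r) ≠ r`. -/
theorem pi_permutations_nontrivial
    (r l r0 : ℕ) (hr0 : r0 ≤ 1) (hne : (l, r0) ≠ (0, 0))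
    (hr : 2 * l + r0 + 2 < r) :
    (ctau^[r0] ((ctau ∘ csigma r)^[2 * l] ((csigma r)^[r0] 3)) =
        (csigma r)^[2 * l + r0] 3 ∧
      ctau^[r0] ((ctau ∘ csigma r)^[2 * l] ((csigma r)^[r0] 3)) ≠ 3) ∧
    (ctau^[r0] ((ctau ∘ csigmaInv r)^[2 * l] ((csigmaInv r)^[r0] r)) =
        (csigmaInv r)^[2 * l + r0] r ∧
      ctau^[r0] ((ctau ∘ csigmaInv r)^[2 * l] ((csigmaInv r)^[r0] r)) ≠ r) := by
  have hne' : 1 ≤ 2 * l + r0 := by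
    rcases Nat.eq_zero_or_pos l with hl | hl
    · rcases Nat.eq_zero_or_pos r0 with h0 | h0
      · exact absurd (by rw [hl, h0]) hne
      · omega
    · omega
  have e1 : (csigma r)^[r0] 3 = 3 + r0 := csigma_iter r r0 3 (by omega)
  have e2 : (ctau ∘ csigma r)^[2 * l] (3 + r0) = 3 + r0 + 2 * l :=
    ctau_csigma_iter r (2 * l) (3 + r0) (by omega) (by omega)
  have e3 : ctau^[r0] (3 + r0 + 2 * l) = 3 + r0 + 2 * l := ctau_iter_fix r0 (by omega)
  have e4 : (csigma r)^[2 * l + r0] 3 = 3 + (2 * l + r0) :=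
    csigma_iter r (2 * l + r0) 3 (by omega)
  have f1 : (csigmaInv r)^[r0] r = r - r0 := csigmaInv_iter r r0 r (by omega)
  have f2 : (ctau ∘ csigmaInv r)^[2 * l] (r - r0) = r - r0 - 2 * l :=
    ctau_csigmaInv_iter r (2 * l) (r - r0) (by omega)
  have f3 : ctau^[r0] (r - r0 - 2 * l) = r - r0 - 2 * l := ctau_iter_fix r0 (by omega)
  have f4 : (csigmaInv r)^[2 * l + r0] r = r - (2 * l + r0) :=
    csigmaInv_iter r (2 * l + r0) r (by omega)
  refine ⟨⟨?_, ?_⟩, ⟨?_, ?_⟩⟩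
  · rw [e1, e2, e3, e4]; omega
  · rw [e1, e2, e3]; omega
  · rw [f1, f2, f3, f4]; omega
  · rw [f1, f2, f3]; omega
end
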